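/- Let K be a field of characteristic zero, n, m ≥ 2, and let p ∈ K[x] be monic of degree n with p = c^n for some c = x + c_0 + c_{-1}x^{-1} + ⋯ ∈ K((x^{-1})). Suppose the polynomial part q ∈ K[x] of c^m (so f := c^m − q has deg f < 0) satisfies: the coefficient of x^{-k} in c^m vanishes for k = 1, …, n−2 and the coefficient of x^{1-n} in c^m is λ ∈ K^×. Then p^m − q^n = nλ x^{mn−m−n+1} + terms of lower degree. -/

import Mathlib

/-!
Put `f := c ^ m - q`; the hypotheses say exactly that `f = λ x ^ (1 - n) + (lower terms)`, hence
`q = x ^ m + (lower terms)` as well. Then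
`p ^ m - q ^ n = (c ^ m) ^ n - q ^ n = f * ∑_{i < n} (c ^ m) ^ i q ^ (n - 1 - i)`,
and each of the `n` summands is `x ^ (m (n - 1)) + (lower terms)`, so the product is
`n λ x ^ ((m - 1) (n - 1)) + (lower terms)`.
-/

open Polynomial HahnSeries Finset

noncomputable section

/-- The embedding `K[x] → K((x⁻¹))` sending `x` to `x = (x⁻¹)⁻¹`, where the
Hahn series variable `t` is `x⁻¹`, so `x` corresponds to `single (-1) 1`. -/
def embX (K : Type*) [Field K] : Polynomial K →ₐ[K] LaurentSeries K :=
  Polynomial.aeval (HahnSeries.single (-1 : ℤ) (1 : K))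

namespace HahnSeries

/-- `x = r t ^ g + (terms of order > g)`; `r` may be zero, in which case this only says that
`x` has order greater than `g`. -/
def HasLeadingTerm {Γ R : Type*} [PartialOrder Γ] [Zero R] (x : R⟦Γ⟧) (g : Γ) (r : R) : Prop :=
  (∀ h < g, x.coeff h = 0) ∧ x.coeff g = r

section LeadingTerm

variable {Γ R : Type*} [PartialOrder Γ]

theorem hasLeadingTerm_single [Zero R] (g : Γ) (r : R) : HasLeadingTerm (single g r) g r :=
  ⟨fun _ h => coeff_single_of_ne h.ne, coeff_single_same g r⟩

theorem HasLeadingTerm.of_lt [Zero R] {x : R⟦Γ⟧} {g g' : Γ} {r : R} (hx : HasLeadingTerm x g r)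
    (hg : g' < g) : HasLeadingTerm x g' 0 :=
  ⟨fun h hh => hx.1 h (hh.trans hg), hx.1 g' hg⟩

theorem HasLeadingTerm.sub [AddGroup R] {x y : R⟦Γ⟧} {g : Γ} {r s : R}
    (hx : HasLeadingTerm x g r) (hy : HasLeadingTerm y g s) : HasLeadingTerm (x - y) g (r - s) :=
  ⟨fun h hh => by rw [coeff_sub, hx.1 h hh, hy.1 h hh, sub_zero], by rw [coeff_sub, hx.2, hy.2]⟩

theorem hasLeadingTerm_sum [AddCommMonoid R] {ι : Type*} {s : Finset ι} {x : ι → R⟦Γ⟧} {g : Γ}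
    {r : ι → R} (hx : ∀ i ∈ s, HasLeadingTerm (x i) g (r i)) :
    HasLeadingTerm (∑ i ∈ s, x i) g (∑ i ∈ s, r i) :=
  ⟨fun h hh => by rw [coeff_sum]; exact sum_eq_zero fun i hi => (hx i hi).1 h hh,
    by rw [coeff_sum]; exact sum_congr rfl fun i hi => (hx i hi).2⟩

end LeadingTerm

section LeadingTermMul

variable {Γ R : Type*} [AddCommMonoid Γ] [LinearOrder Γ] [IsOrderedCancelAddMonoid Γ]

theorem HasLeadingTerm.mul [NonUnitalNonAssocSemiring R] {x y : R⟦Γ⟧} {g g' : Γ} {r s : R}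
    (hx : HasLeadingTerm x g r) (hy : HasLeadingTerm y g' s) :
    HasLeadingTerm (x * y) (g + g') (r * s) := by
  have hsmall : ∀ ij : Γ × Γ, ij.1 + ij.2 ≤ g + g' → ij ≠ (g, g') →
      x.coeff ij.1 * y.coeff ij.2 = 0 := by
    rintro ⟨i, j⟩ hij hne
    rcases lt_or_ge i g with hi | hi
    · rw [hx.1 i hi, zero_mul]
    rcases lt_or_ge j g' with hj | hj
    · rw [hy.1 j hj, mul_zero]
    exact absurd (Prod.ext
      (le_antisymm (le_of_add_le_add_right ((add_le_add le_rfl hj).trans hij)) hi)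
      (le_antisymm (le_of_add_le_add_left ((add_le_add hi le_rfl).trans hij)) hj)) hne
  refine ⟨fun h hh => ?_, ?_⟩
  · rw [coeff_mul]
    refine sum_eq_zero fun ij hij => hsmall ij ?_ ?_
    · rw [(mem_antidiagonal.1 hij).2.2]
      exact hh.le
    · rintro rfl
      exact hh.ne (mem_antidiagonal.1 hij).2.2.symm
  · rw [coeff_mul, ← hx.2, ← hy.2]
    refine sum_eq_single (g, g') (fun ij hij hne =>
      hsmall ij (mem_antidiagonal.1 hij).2.2.le hne) fun hnot => ?_
    by_contra hne
    exact hnot (mem_antidiagonal.2 ⟨(mem_support _ _).2 (left_ne_zero_of_mul hne),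
      (mem_support _ _).2 (right_ne_zero_of_mul hne), rfl⟩)

theorem HasLeadingTerm.pow [Semiring R] {x : R⟦Γ⟧} {g : Γ} {r : R} (hx : HasLeadingTerm x g r)
    (k : ℕ) : HasLeadingTerm (x ^ k) (k • g) (r ^ k) := by
  induction k with
  | zero => simpa using hasLeadingTerm_single (0 : Γ) (1 : R)
  | succ k ih => simpa only [pow_succ, succ_nsmul] using ih.mul hx

theorem hasLeadingTerm_geom_sum₂ [Semiring R] {x y : R⟦Γ⟧} {g : Γ} (hx : HasLeadingTerm x g 1)
    (hy : HasLeadingTerm y g 1) (n : ℕ) :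
    HasLeadingTerm (∑ i ∈ range n, x ^ i * y ^ (n - 1 - i)) ((n - 1) • g) n := by
  have hterm : ∀ i ∈ range n, HasLeadingTerm (x ^ i * y ^ (n - 1 - i)) ((n - 1) • g) 1 := by
    intro i hi
    have hi' : i + (n - 1 - i) = n - 1 := Nat.add_sub_cancel' (by simp at hi; omega)
    simpa only [← add_smul, hi', one_pow, mul_one] using (hx.pow i).mul (hy.pow (n - 1 - i))
  simpa using hasLeadingTerm_sum hterm

end LeadingTermMul

end HahnSeries

section Embedding

variable {K : Type*} [Field K]

theorem embX_monomial (k : ℕ) (a : K) : embX K (monomial k a) = single (-(k : ℤ)) a := by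
  rw [embX, aeval_monomial, single_pow, one_pow, HahnSeries.algebraMap_apply',
    PowerSeries.algebraMap_apply]
  simp

theorem coeff_embX (p : K[X]) (j : ℤ) :
    (embX K p).coeff j = if j ≤ 0 then p.coeff (-j).toNat else 0 := by
  induction p using Polynomial.induction_on' with
  | add p q hp hq =>
    rw [map_add, HahnSeries.coeff_add, hp, hq]
    split <;> simp
  | monomial k a =>
    rw [embX_monomial, coeff_monomial]
    by_cases hjk : j = -(k : ℤ)
    · simp [hjk]
    · rw [coeff_single_of_ne hjk]
      split_ifs <;> first | rfl | omega

theorem coeff_embX_neg (p : K[X]) (k : ℕ) : (embX K p).coeff (-(k : ℤ)) = p.coeff k := by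
  simp [coeff_embX]

theorem coeff_embX_of_pos (p : K[X]) {j : ℤ} (hj : 0 < j) : (embX K p).coeff j = 0 := by
  simp [coeff_embX, hj.not_ge]

theorem degree_lt_of_hasLeadingTerm_embX {p : K[X]} {d : ℕ}
    (hp : HasLeadingTerm (embX K p) (-(d : ℤ)) 0) : p.degree < d := by
  refine (degree_lt_iff_coeff_zero p d).2 fun k hk => ?_
  rw [← coeff_embX_neg]
  rcases (Nat.cast_le (α := ℤ).2 hk).lt_or_eq with hlt | heq
  · exact hp.1 _ (neg_lt_neg hlt)
  · rw [← heq]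
    exact hp.2

end Embedding

theorem statement9_general (K : Type*) [Field K] (n m : ℕ)
    (hn : 2 ≤ n) (hm : 2 ≤ m) (p q : Polynomial K)
    (c : LaurentSeries K)
    (hc1 : c.coeff (-1) = 1) (hc2 : ∀ j : ℤ, j < -1 → c.coeff j = 0)
    (hcn : c ^ n = embX K p)
    (hq : ∀ j : ℤ, j ≤ 0 → (c ^ m).coeff j = (embX K q).coeff j)
    (lam : K)
    (hvan : ∀ k : ℕ, 1 ≤ k → k ≤ n - 2 → (c ^ m).coeff (k : ℤ) = 0)
    (hlead : (c ^ m).coeff ((n : ℤ) - 1) = lam) :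
    (p ^ m - q ^ n - Polynomial.C ((n : K) * lam) * Polynomial.X ^ ((m - 1) * (n - 1))).degree <
      (((m - 1) * (n - 1) : ℕ) : WithBot ℕ) := by
  have hcm : HasLeadingTerm (c ^ m) (-m) 1 := by
    simpa using HasLeadingTerm.pow ⟨hc2, hc1⟩ m
  have hf : HasLeadingTerm (c ^ m - embX K q) (n - 1) lam := by
    refine ⟨fun j hj => ?_, by
      rw [HahnSeries.coeff_sub, hlead, coeff_embX_of_pos q (by omega), sub_zero]⟩
    rw [HahnSeries.coeff_sub, sub_eq_zero]
    rcases le_or_gt j 0 with hj0 | hj0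
    · exact hq j hj0
    · lift j to ℕ using hj0.le
      rw [hvan j (by omega) (by omega), coeff_embX_of_pos q hj0]
  have hqm : HasLeadingTerm (embX K q) (-m) 1 := by
    simpa using hcm.sub (hf.of_lt (by omega))
  have hS := hasLeadingTerm_geom_sum₂ hcm hqm n
  have hdiff : embX K (p ^ m - q ^ n) =
      (∑ i ∈ range n, (c ^ m) ^ i * embX K q ^ (n - 1 - i)) * (c ^ m - embX K q) := by
    rw [geom_sum₂_mul, map_sub, map_pow, map_pow, ← hcn, ← pow_mul, ← pow_mul, mul_comm]
  have hmain : HasLeadingTerm (embX K (p ^ m - q ^ n)) (-((m - 1) * (n - 1) : ℕ)) (n * lam) := by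
    rw [hdiff]
    convert hS.mul hf using 1
    rw [smul_neg, nsmul_eq_mul]
    push_cast [Nat.cast_sub (by omega : 1 ≤ m), Nat.cast_sub (by omega : 1 ≤ n)]
    ring
  apply degree_lt_of_hasLeadingTerm_embX
  rw [map_sub, C_mul_X_pow_eq_monomial, embX_monomial]
  simpa using hmain.sub (hasLeadingTerm_single _ ((n : K) * lam))

/-- Let `n, m ≥ 2`, `p ∈ K[x]` monic of degree `n` with `p = c^n`
for some `c = x + c₀ + c₋₁x⁻¹ + ⋯ ∈ K((x⁻¹))`.  If the polynomial part
`q ∈ K[x]` of `c^m` satisfies: the coefficient of `x^{-k}` in `c^m` vanishes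
for `k = 1, …, n−2` and the coefficient of `x^{1-n}` in `c^m` is `λ ∈ K^×`,
then `p^m − q^n = nλ x^{mn−m−n+1} +` lower order terms.
The coefficient of `x^k` of a Laurent series `f` is `f.coeff (-k)`;
`mn−m−n+1 = (m-1)(n-1)`. -/
theorem statement9 (K : Type*) [Field K] [CharZero K] (n m : ℕ)
    (hn : 2 ≤ n) (hm : 2 ≤ m) (p q : Polynomial K) (hp : p.Monic) (hpn : p.natDegree = n)
    (c : LaurentSeries K)
    (hc1 : c.coeff (-1) = 1) (hc2 : ∀ j : ℤ, j < -1 → c.coeff j = 0)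
    (hcn : c ^ n = embX K p)
    (hq : ∀ j : ℤ, j ≤ 0 → (c ^ m).coeff j = (embX K q).coeff j)
    (lam : K) (hlam : lam ≠ 0)
    (hvan : ∀ k : ℕ, 1 ≤ k → k ≤ n - 2 → (c ^ m).coeff (k : ℤ) = 0)
    (hlead : (c ^ m).coeff ((n : ℤ) - 1) = lam) :
    (p ^ m - q ^ n - Polynomial.C ((n : K) * lam) * Polynomial.X ^ ((m - 1) * (n - 1))).degree <
      (((m - 1) * (n - 1) : ℕ) : WithBot ℕ) :=
  statement9_general K n m hn hm p q c hc1 hc2 hcn hq lam hvan hlead
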